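/- arXiv:2111.09971 — 5 statements merged into one kernel-verified Lean document; each statement's English description precedes it below -/
import Mathlib

section
/- Let P be a real normed vector space, let 𝒴 ⊆ P, let U be a set of control values, and let q : U × P × ℝ_{≥0} → ℝ. Let {(u_i, y_i, t_i)}_{i=1}^{M} with u_i ∈ U, y_i ∈ P, t_i ≥ 0, and let ε̄ > 0, γ_dyn > 0. Suppose that for each i: (i) |q(u_i, y, t_i) − q(u_i, y', t_i)| ≤ L_i ‖y − y'‖ for all y, y' in the closed ball of radius ε̄ centered at y_i, where L_i > 0; (ii) |q(u_i, ȳ, t') − q(u_i, ȳ, t'')| ≤ B_i for all ȳ in the closed ball of radius ε̄ centered at y_i and all t', t'' ≥ 0, where B_i ≥ 0; (iii) q(u_i, y_i, t_i) ≥ γ_dyn; and (iv) ε̄ ≤ (γ_dyn − B_i) / L_i. Suppose further that for every y ∈ 𝒴 there exists an index i with ‖y − y_i‖ ≤ ε̄. Then for every y ∈ 𝒴 and every t ≥ 0 there exists u ∈ U (namely u = u_i for the index i realizing the net condition) such that q(u, y, t) ≥ 0. -/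
/-- First claim of Proposition 3: if the expert data `(uᵢ, yᵢ, tᵢ)` satisfy
`q (uᵢ, yᵢ, tᵢ) ≥ γdyn`, `q` is Lipschitz in `y` with constant `Lq i` near `yᵢ`,
its variation in time near `yᵢ` is bounded by `Bq i`, `ε̄ ≤ (γdyn - Bq i)/(Lq i)`,
and the `yᵢ` form an `ε̄`-net of `𝒴`, then for every `y ∈ 𝒴` and `t ≥ 0` there is a
control value `u` with `q u y t ≥ 0`. -/
theorem stmt_4 {P U : Type*} [NormedAddCommGroup P] [NormedSpace ℝ P]
    (𝒴 : Set P) (q : U → P → ℝ → ℝ)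
    (M : ℕ) (u : Fin M → U) (y : Fin M → P) (t : Fin M → ℝ) (ht : ∀ i, 0 ≤ t i)
    (εbar : ℝ) (hεbar : 0 < εbar) (γdyn : ℝ) (hγ : 0 < γdyn)
    (Lq : Fin M → ℝ) (hLq : ∀ i, 0 < Lq i)
    (hLip : ∀ i : Fin M, ∀ y' ∈ Metric.closedBall (y i) εbar,
      ∀ y'' ∈ Metric.closedBall (y i) εbar,
        |q (u i) y' (t i) - q (u i) y'' (t i)| ≤ Lq i * ‖y' - y''‖)
    (Bq : Fin M → ℝ) (hBq : ∀ i, 0 ≤ Bq i)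
    (hBnd : ∀ i : Fin M, ∀ ybar ∈ Metric.closedBall (y i) εbar,
      ∀ t' ≥ (0 : ℝ), ∀ t'' ≥ (0 : ℝ),
        |q (u i) ybar t' - q (u i) ybar t''| ≤ Bq i)
    (hval : ∀ i, γdyn ≤ q (u i) (y i) (t i))
    (hfine : ∀ i, εbar ≤ (γdyn - Bq i) / Lq i)
    (hnet : ∀ y' ∈ 𝒴, ∃ i : Fin M, ‖y' - y i‖ ≤ εbar) :
    ∀ y' ∈ 𝒴, ∀ t' ≥ (0 : ℝ), ∃ u' : U, 0 ≤ q u' y' t' := by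
  intro y' hy' t' ht'
  obtain ⟨i, hi⟩ := hnet y' hy'
  refine ⟨u i, ?_⟩
  have hmem : y' ∈ Metric.closedBall (y i) εbar := by
    simpa [Metric.mem_closedBall, dist_eq_norm] using hi
  have hmem0 : y i ∈ Metric.closedBall (y i) εbar :=
    Metric.mem_closedBall_self hεbar.le
  have h1 : |q (u i) y' (t i) - q (u i) (y i) (t i)| ≤ Lq i * εbar := by
    refine le_trans (hLip i y' hmem (y i) hmem0) ?_
    exact mul_le_mul_of_nonneg_left hi (hLq i).le
  have h2 : |q (u i) y' t' - q (u i) y' (t i)| ≤ Bq i :=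
    hBnd i y' hmem t' ht' (t i) (ht i)
  have h3 : Lq i * εbar ≤ γdyn - Bq i := by
    have := hfine i
    rw [le_div_iff₀ (hLq i)] at this
    linarith [this]
  have hv := hval i
  have e1 := abs_le.1 h1
  have e2 := abs_le.1 h2
  linarith [e1.2, e2.2]
end

section
/- Let n, m be natural numbers and work in Euclidean space ℝⁿ with its standard inner product ⟨·,·⟩ and norm, and in ℝᵐ with its Euclidean norm. Let S ⊆ ℝⁿ, let x, x̂ ∈ S with ‖x̂ − x‖ ≤ Δ for some Δ ≥ 0, and let u ∈ ℝᵐ. Let B₁ : ℝⁿ → ℝ, B₂ : ℝⁿ → ℝᵐ, and B₃ : ℝⁿ → ℝ be Lipschitz on S with constants L₁, L₂, L₃ ≥ 0, respectively. If B₁(x̂) + ⟨B₂(x̂), u⟩ + B₃(x̂)‖u‖ − (L₁ + L₂‖u‖ + L₃‖u‖)Δ ≥ 0, then B₁(x) + ⟨B₂(x), u⟩ + B₃(x)‖u‖ ≥ 0. -/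
open scoped RealInnerProductSpace

/-- Measurement-robustness step in the proof of Theorem 1: if the robustified
barrier constraint holds at the state estimate `x̂` with `‖x̂ - x‖ ≤ Δ`, then the
(un-robustified) barrier constraint holds at the true state `x`. -/
theorem stmt_5 {n m : ℕ} (S : Set (EuclideanSpace ℝ (Fin n)))
    (x xhat : EuclideanSpace ℝ (Fin n)) (hxS : x ∈ S) (hxhatS : xhat ∈ S)
    (Δ : ℝ) (hΔ : 0 ≤ Δ) (hclose : ‖xhat - x‖ ≤ Δ)
    (u : EuclideanSpace ℝ (Fin m))
    (B₁ : EuclideanSpace ℝ (Fin n) → ℝ)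
    (B₂ : EuclideanSpace ℝ (Fin n) → EuclideanSpace ℝ (Fin m))
    (B₃ : EuclideanSpace ℝ (Fin n) → ℝ)
    (L₁ L₂ L₃ : ℝ) (hL₁ : 0 ≤ L₁) (hL₂ : 0 ≤ L₂) (hL₃ : 0 ≤ L₃)
    (hLip₁ : ∀ a ∈ S, ∀ b ∈ S, |B₁ a - B₁ b| ≤ L₁ * ‖a - b‖)
    (hLip₂ : ∀ a ∈ S, ∀ b ∈ S, ‖B₂ a - B₂ b‖ ≤ L₂ * ‖a - b‖)
    (hLip₃ : ∀ a ∈ S, ∀ b ∈ S, |B₃ a - B₃ b| ≤ L₃ * ‖a - b‖)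
    (hrobust : 0 ≤ B₁ xhat + ⟪B₂ xhat, u⟫ + B₃ xhat * ‖u‖
      - (L₁ + L₂ * ‖u‖ + L₃ * ‖u‖) * Δ) :
    0 ≤ B₁ x + ⟪B₂ x, u⟫ + B₃ x * ‖u‖ := by
  have h1 : B₁ xhat - B₁ x ≤ L₁ * Δ := by
    have := hLip₁ xhat hxhatS x hxS
    have := abs_le.mp this
    nlinarith [mul_le_mul_of_nonneg_left hclose hL₁]
  have h2 : ⟪B₂ xhat, u⟫ - ⟪B₂ x, u⟫ ≤ L₂ * ‖u‖ * Δ := by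
    have h := real_inner_le_norm (B₂ xhat - B₂ x) u
    rw [inner_sub_left] at h
    have h' := hLip₂ xhat hxhatS x hxS
    have hb : ‖B₂ xhat - B₂ x‖ * ‖u‖ ≤ L₂ * ‖xhat - x‖ * ‖u‖ :=
      mul_le_mul_of_nonneg_right h' (norm_nonneg u)
    have hc : L₂ * ‖xhat - x‖ * ‖u‖ ≤ L₂ * Δ * ‖u‖ :=
      mul_le_mul_of_nonneg_right (mul_le_mul_of_nonneg_left hclose hL₂) (norm_nonneg u)
    nlinarith
  have h3 : B₃ xhat * ‖u‖ - B₃ x * ‖u‖ ≤ L₃ * ‖u‖ * Δ := by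
    have := abs_le.mp (hLip₃ xhat hxhatS x hxS)
    nlinarith [mul_le_mul_of_nonneg_left hclose hL₃, norm_nonneg u]
  nlinarith
end

section
/- Let n, m be natural numbers and work in Euclidean space ℝⁿ with its standard inner product ⟨·,·⟩ and norm, and in ℝᵐ with its Euclidean norm. Let p, f, f̂ ∈ ℝⁿ, let g, ĝ : ℝᵐ → ℝⁿ be continuous linear maps, let u ∈ ℝᵐ, let a ∈ ℝ, and let Δ_F, Δ_G ≥ 0. Suppose ‖f̂ − f‖ ≤ Δ_F and the operator norm of ĝ − g is at most Δ_G. If ⟨p, f̂ + ĝ(u)⟩ + a ≥ ‖p‖(Δ_F + Δ_G‖u‖), then ⟨p, f + g(u)⟩ + a ≥ 0. -/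
open scoped RealInnerProductSpace

/-- Model-robustness step in the proof of Theorem 1: if
`⟪p, f̂ + ĝ u⟫ + a ≥ ‖p‖ (Δ_F + Δ_G ‖u‖)` where `‖f̂ - f‖ ≤ Δ_F` and
`‖ĝ - g‖ ≤ Δ_G` (operator norm), then `⟪p, f + g u⟫ + a ≥ 0`. -/
theorem stmt_6 {n m : ℕ}
    (p f fhat : EuclideanSpace ℝ (Fin n))
    (g ghat : EuclideanSpace ℝ (Fin m) →L[ℝ] EuclideanSpace ℝ (Fin n))
    (u : EuclideanSpace ℝ (Fin m)) (a : ℝ)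
    (ΔF ΔG : ℝ) (hΔF : 0 ≤ ΔF) (hΔG : 0 ≤ ΔG)
    (hf : ‖fhat - f‖ ≤ ΔF) (hg : ‖ghat - g‖ ≤ ΔG)
    (hrobust : ‖p‖ * (ΔF + ΔG * ‖u‖) ≤ ⟪p, fhat + ghat u⟫ + a) :
    0 ≤ ⟪p, f + g u⟫ + a := by
  have key : ⟪p, (fhat - f) + (ghat - g) u⟫ ≤ ‖p‖ * (ΔF + ΔG * ‖u‖) := by
    calc ⟪p, (fhat - f) + (ghat - g) u⟫ ≤ ‖p‖ * ‖(fhat - f) + (ghat - g) u‖ :=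
          real_inner_le_norm _ _
      _ ≤ ‖p‖ * (ΔF + ΔG * ‖u‖) := by
          apply mul_le_mul_of_nonneg_left _ (norm_nonneg p)
          calc ‖(fhat - f) + (ghat - g) u‖ ≤ ‖fhat - f‖ + ‖(ghat - g) u‖ := norm_add_le _ _
            _ ≤ ΔF + ΔG * ‖u‖ := by
                gcongr
                calc ‖(ghat - g) u‖ ≤ ‖ghat - g‖ * ‖u‖ := (ghat - g).le_opNorm u
                  _ ≤ ΔG * ‖u‖ := by gcongr
  have heq : ⟪p, fhat + ghat u⟫ = ⟪p, f + g u⟫ + ⟪p, (fhat - f) + (ghat - g) u⟫ := by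
    rw [← inner_add_right]
    congr 1
    simp [ContinuousLinearMap.sub_apply]
    abel
  linarith
end

section
/- Let n, m be natural numbers and work in Euclidean space ℝⁿ with its standard inner product ⟨·,·⟩ and norm. Let h : ℝⁿ → ℝ be continuously differentiable with gradient ∇h, and let α : ℝ → ℝ be locally Lipschitz, strictly increasing, with α(0) = 0. Let x : ℝ → ℝⁿ be differentiable on [0, ∞), let u : ℝ → ℝᵐ, and let f, f̂ : ℝ → ℝⁿ and g(t), ĝ(t) : ℝᵐ → ℝⁿ (continuous linear maps for each t) be such that for all t ≥ 0: (i) x'(t) = f(t) + g(t)(u(t)); (ii) ‖f̂(t) − f(t)‖ ≤ δ_F(t) and the operator norm of ĝ(t) − g(t) is at most δ_G(t), where δ_F(t), δ_G(t) ≥ 0; and (iii) ⟨∇h(x(t)), f̂(t) + ĝ(t)(u(t))⟩ + α(h(x(t))) ≥ ‖∇h(x(t))‖(δ_F(t) + δ_G(t)‖u(t)‖). If h(x(0)) ≥ 0, then h(x(t)) ≥ 0 for all t ≥ 0. -/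
open scoped RealInnerProductSpace

/-!
Along the trajectory, `y t = h (x t)` has right derivative `⟪∇h, f + g u⟫`, and the model errors
change the inner product by at most `‖∇h‖ (δF + δG ‖u‖)`, so the robust barrier inequality gives
`y' ≥ -α y`. Near `0`, `α y ≤ K |y|` since `α` is locally Lipschitz with `α 0 = 0`; hence `-y` can
never cross the barrier `ε e^{Lt}` for `L > K`, and letting `ε → 0` gives `y ≥ 0`.
-/

open Set Filter Topology

theorem HasGradientAt.comp_hasDerivWithinAt {F : Type*} [NormedAddCommGroup F]
    [InnerProductSpace ℝ F] [CompleteSpace F] {h : F → ℝ} {p : F} {x : ℝ → F} {v : F}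
    {s : Set ℝ} {t : ℝ} (hh : HasGradientAt h p (x t)) (hx : HasDerivWithinAt x v s t) :
    HasDerivWithinAt (fun τ => h (x τ)) ⟪p, v⟫ s t :=
  hh.hasFDerivAt.comp_hasDerivWithinAt t hx

theorem neg_le_inner_of_robust_barrier {E F : Type*} [NormedAddCommGroup E] [NormedSpace ℝ E]
    [NormedAddCommGroup F] [InnerProductSpace ℝ F] {p f fhat : F} {g ghat : E →L[ℝ] F} {u : E}
    {δF δG a : ℝ} (herrF : ‖fhat - f‖ ≤ δF) (herrG : ‖ghat - g‖ ≤ δG)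
    (hbarrier : ‖p‖ * (δF + δG * ‖u‖) ≤ ⟪p, fhat + ghat u⟫ + a) :
    -a ≤ ⟪p, f + g u⟫ := by
  have hdiff : ‖(fhat + ghat u) - (f + g u)‖ ≤ δF + δG * ‖u‖ := by
    rw [add_sub_add_comm, ← sub_apply]
    exact (norm_add_le _ _).trans <| add_le_add herrF <|
      ((ghat - g).le_opNorm u).trans (mul_le_mul_of_nonneg_right herrG (norm_nonneg u))
  have hinner : ⟪p, (fhat + ghat u) - (f + g u)⟫ ≤ ‖p‖ * (δF + δG * ‖u‖) :=
    (real_inner_le_norm _ _).trans (mul_le_mul_of_nonneg_left hdiff (norm_nonneg p))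
  rw [inner_sub_right] at hinner
  linarith

theorem LocallyLipschitz.exists_le_mul_abs {α : ℝ → ℝ} (hα : LocallyLipschitz α) (hα0 : α 0 = 0) :
    ∃ K r : ℝ, 0 < r ∧ ∀ z, |z| < r → α z ≤ K * |z| := by
  obtain ⟨K, s, hs, hK⟩ := hα 0
  obtain ⟨r, hr, hball⟩ := Metric.mem_nhds_iff.1 hs
  refine ⟨K, r, hr, fun z hz => ?_⟩
  have hz : z ∈ s := hball (by simpa [Real.dist_eq] using hz)
  have := hK.dist_le_mul z hz 0 (mem_of_mem_nhds hs)
  rw [Real.dist_eq, Real.dist_eq, hα0, sub_zero, sub_zero] at this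
  exact (le_abs_self _).trans this

section Comparison

variable {y y' α : ℝ → ℝ} {K r : ℝ}

theorem neg_le_exp_barrier (hy : ∀ t ≥ 0, HasDerivWithinAt y (y' t) (Ici 0) t)
    (hy' : ∀ t ≥ 0, -α (y t) ≤ y' t) (hα : ∀ z, |z| < r → α z ≤ K * |z|) (hy0 : 0 ≤ y 0)
    {ε L T : ℝ} (hε : 0 < ε) (hKL : K < L) (hL : 0 < L) (hεr : ε * Real.exp (L * T) < r) :
    ∀ t ∈ Icc 0 T, -y t ≤ ε * Real.exp (L * t) := by
  have hB : ∀ t, HasDerivAt (fun τ => ε * Real.exp (L * τ)) (L * (ε * Real.exp (L * t))) t := by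
    intro t
    exact (((hasDerivAt_id t).const_mul L).exp.const_mul ε).congr_deriv (by simp only [id]; ring)
  refine image_le_of_deriv_right_lt_deriv_boundary (f := fun τ => -y τ)
    (fun t ht => (hy t ht.1).continuousWithinAt.mono Icc_subset_Ici_self |>.neg)
    (fun t ht => ((hy t ht.1).mono (Ici_subset_Ici.2 ht.1)).neg)
    (show -y 0 ≤ ε * Real.exp (L * 0) by rw [mul_zero, Real.exp_zero, mul_one]; linarith) hB ?_
  intro t ht hyt
  have hBpos : 0 < ε * Real.exp (L * t) := by positivity
  have habs : |y t| = ε * Real.exp (L * t) := by rw [← hyt, abs_of_nonpos (by linarith)]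
  have hsmall : |y t| < r := by
    rw [habs]
    refine lt_of_le_of_lt ?_ hεr
    gcongr
    exact ht.2.le
  calc -y' t ≤ α (y t) := by linarith [hy' t ht.1]
    _ ≤ K * |y t| := hα _ hsmall
    _ < L * (ε * Real.exp (L * t)) := by rw [habs]; gcongr

theorem nonneg_of_hasDerivWithinAt_ge_neg (hy : ∀ t ≥ 0, HasDerivWithinAt y (y' t) (Ici 0) t)
    (hy' : ∀ t ≥ 0, -α (y t) ≤ y' t) (hr : 0 < r) (hα : ∀ z, |z| < r → α z ≤ K * |z|)
    (hy0 : 0 ≤ y 0) : ∀ t ≥ 0, 0 ≤ y t := by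
  intro T hT
  set L := |K| + 1
  have htendsto : Tendsto (fun ε => ε * Real.exp (L * T)) (𝓝[>] 0) (𝓝 0) :=
    ((continuous_mul_const _).tendsto' 0 0 (zero_mul _)).mono_left nhdsWithin_le_nhds
  have hbound : ∀ᶠ ε in 𝓝[>] (0 : ℝ), -y T ≤ ε * Real.exp (L * T) := by
    filter_upwards [self_mem_nhdsWithin, htendsto.eventually (eventually_lt_nhds hr)]
      with ε hε hεr
    exact neg_le_exp_barrier hy hy' hα hy0 hε (by linarith [le_abs_self K]) (by positivity) hεr
      T ⟨hT, le_rfl⟩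
  exact neg_nonpos.1 (ge_of_tendsto htendsto hbound)

end Comparison

theorem stmt_8_general {n m : ℕ}
    (h : EuclideanSpace ℝ (Fin n) → ℝ) (hh : ContDiff ℝ 1 h)
    (α : ℝ → ℝ) (hα : LocallyLipschitz α) (hα0 : α 0 = 0)
    (x : ℝ → EuclideanSpace ℝ (Fin n)) (u : ℝ → EuclideanSpace ℝ (Fin m))
    (f fhat : ℝ → EuclideanSpace ℝ (Fin n))
    (g ghat : ℝ → EuclideanSpace ℝ (Fin m) →L[ℝ] EuclideanSpace ℝ (Fin n))
    (δF δG : ℝ → ℝ)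
    (hdyn : ∀ t ≥ (0 : ℝ), HasDerivWithinAt x (f t + g t (u t)) (Set.Ici 0) t)
    (herrF : ∀ t ≥ (0 : ℝ), ‖fhat t - f t‖ ≤ δF t)
    (herrG : ∀ t ≥ (0 : ℝ), ‖ghat t - g t‖ ≤ δG t)
    (hbarrier : ∀ t ≥ (0 : ℝ),
      ‖gradient h (x t)‖ * (δF t + δG t * ‖u t‖) ≤
        ⟪gradient h (x t), fhat t + ghat t (u t)⟫ + α (h (x t)))
    (h0 : 0 ≤ h (x 0)) :
    ∀ t ≥ (0 : ℝ), 0 ≤ h (x t) := by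
  obtain ⟨K, r, hr, hαK⟩ := hα.exists_le_mul_abs hα0
  refine nonneg_of_hasDerivWithinAt_ge_neg (y' := fun t => ⟪gradient h (x t), f t + g t (u t)⟫)
    (fun t ht => ?_) (fun t ht => ?_) hr hαK h0
  · exact ((hh.differentiable one_ne_zero) (x t)).hasGradientAt.comp_hasDerivWithinAt (hdyn t ht)
  · exact neg_le_inner_of_robust_barrier (herrF t ht) (herrG t ht) (hbarrier t ht)

/-- State-feedback form of Theorem 1 (exact state measurements): a trajectory of
the true dynamics `ẋ = f + g u` whose models `f̂, ĝ` satisfy the error bounds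
`δ_F, δ_G` remains in the zero-superlevel set of `h` provided the robust control
barrier inequality holds along the trajectory and the trajectory starts in it. -/
theorem stmt_8 {n m : ℕ}
    (h : EuclideanSpace ℝ (Fin n) → ℝ) (hh : ContDiff ℝ 1 h)
    (α : ℝ → ℝ) (hα : LocallyLipschitz α) (hmono : StrictMono α) (hα0 : α 0 = 0)
    (x : ℝ → EuclideanSpace ℝ (Fin n)) (u : ℝ → EuclideanSpace ℝ (Fin m))
    (f fhat : ℝ → EuclideanSpace ℝ (Fin n))
    (g ghat : ℝ → EuclideanSpace ℝ (Fin m) →L[ℝ] EuclideanSpace ℝ (Fin n))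
    (δF δG : ℝ → ℝ) (hδF : ∀ t ≥ (0 : ℝ), 0 ≤ δF t) (hδG : ∀ t ≥ (0 : ℝ), 0 ≤ δG t)
    (hdyn : ∀ t ≥ (0 : ℝ), HasDerivWithinAt x (f t + g t (u t)) (Set.Ici 0) t)
    (herrF : ∀ t ≥ (0 : ℝ), ‖fhat t - f t‖ ≤ δF t)
    (herrG : ∀ t ≥ (0 : ℝ), ‖ghat t - g t‖ ≤ δG t)
    (hbarrier : ∀ t ≥ (0 : ℝ),
      ‖gradient h (x t)‖ * (δF t + δG t * ‖u t‖) ≤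
        ⟪gradient h (x t), fhat t + ghat t (u t)⟫ + α (h (x t)))
    (h0 : 0 ≤ h (x 0)) :
    ∀ t ≥ (0 : ℝ), 0 ≤ h (x t) :=
  stmt_8_general h hh α hα hα0 x u f fhat g ghat δF δG hdyn herrF herrG hbarrier h0
end

section
/- Let n and ℓ be positive natural numbers, let w_1, …, w_ℓ ∈ ℝⁿ (Euclidean), let b, θ ∈ ℝ^ℓ, and define G : ℝⁿ → ℝⁿ by G(x) := −√(2/ℓ) Σ_{i=1}^{ℓ} θ_i sin(⟨x, w_i⟩ + b_i) w_i. Let W : ℝⁿ → ℝ^ℓ be the linear map with (Wx)_i = ⟨x, w_i⟩. Then for all x₁, x₂ ∈ ℝⁿ, ‖G(x₁) − G(x₂)‖₂ ≤ √(2/ℓ) ‖θ‖_∞ ‖W‖² ‖x₁ − x₂‖₂, where ‖W‖ denotes the operator (spectral) norm of W and ‖θ‖_∞ := max_i |θ_i|. -/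
/-!
The gradient factors as `G = -√(2/ℓ) • W† ∘ φ ∘ W`, where `φ y = (θᵢ sin (yᵢ + bᵢ))ᵢ` acts
coordinatewise. Since `sin` is 1-Lipschitz, `φ` is `‖θ‖_∞`-Lipschitz, and both `W` and its
adjoint have operator norm `‖W‖`.
-/

open scoped RealInnerProductSpace

open ContinuousLinearMap

variable {ι : Type*} [Fintype ι]

theorem EuclideanSpace.norm_le_mul_norm_of_forall_abs_le {x y : EuclideanSpace ℝ ι} {K : ℝ}
    (hK : 0 ≤ K) (h : ∀ i, |x i| ≤ K * |y i|) : ‖x‖ ≤ K * ‖y‖ := by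
  refine (pow_le_pow_iff_left₀ (norm_nonneg _) (by positivity) two_ne_zero).mp ?_
  rw [mul_pow, EuclideanSpace.norm_sq_eq, EuclideanSpace.norm_sq_eq, Finset.mul_sum]
  refine Finset.sum_le_sum fun i _ => ?_
  rw [← mul_pow]
  exact pow_le_pow_left₀ (norm_nonneg _) (h i) 2

theorem ContinuousLinearMap.adjoint_apply_eq_sum_smul {E : Type*} [NormedAddCommGroup E]
    [InnerProductSpace ℝ E] [CompleteSpace E] {W : E →L[ℝ] EuclideanSpace ℝ ι} {w : ι → E}
    (hW : ∀ x i, W x i = ⟪x, w i⟫) (c : EuclideanSpace ℝ ι) :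
    adjoint W c = ∑ i, c i • w i := by
  refine ext_inner_right ℝ fun v => ?_
  rw [adjoint_inner_left, sum_inner, PiLp.inner_apply]
  refine Finset.sum_congr rfl fun i _ => ?_
  rw [hW, real_inner_smul_left, RCLike.inner_apply, conj_trivial, real_inner_comm, mul_comm]

noncomputable def sinFeatureMap (θ b : ι → ℝ) (y : EuclideanSpace ℝ ι) :
    EuclideanSpace ℝ ι :=
  WithLp.toLp 2 fun i => θ i * Real.sin (y i + b i)

theorem norm_sinFeatureMap_sub_le {θ b : ι → ℝ} {M : ℝ} (hM : 0 ≤ M) (hθ : ∀ i, |θ i| ≤ M)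
    (y z : EuclideanSpace ℝ ι) :
    ‖sinFeatureMap θ b y - sinFeatureMap θ b z‖ ≤ M * ‖y - z‖ := by
  refine EuclideanSpace.norm_le_mul_norm_of_forall_abs_le hM fun i => ?_
  have hsin : |Real.sin (y i + b i) - Real.sin (z i + b i)| ≤ |y i - z i| := by
    simpa using Real.abs_sin_sub_sin_le (y i + b i) (z i + b i)
  simp only [sinFeatureMap, PiLp.sub_apply, ← mul_sub, abs_mul]
  exact mul_le_mul (hθ i) hsin (abs_nonneg _) hM

theorem stmt_12_general {n ℓ : ℕ} (hℓ : 0 < ℓ)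
    (w : Fin ℓ → EuclideanSpace ℝ (Fin n)) (b θ : Fin ℓ → ℝ)
    (G : EuclideanSpace ℝ (Fin n) → EuclideanSpace ℝ (Fin n))
    (hG : ∀ x, G x =
      -(Real.sqrt (2 / ℓ)) • ∑ i, (θ i * Real.sin (⟪x, w i⟫ + b i)) • w i)
    (W : EuclideanSpace ℝ (Fin n) →L[ℝ] EuclideanSpace ℝ (Fin ℓ))
    (hW : ∀ x i, W x i = ⟪x, w i⟫) :
    haveI : Nonempty (Fin ℓ) := Fin.pos_iff_nonempty.mp hℓ
    ∀ x₁ x₂ : EuclideanSpace ℝ (Fin n),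
      ‖G x₁ - G x₂‖ ≤ Real.sqrt (2 / ℓ) * (⨆ i, |θ i|) * ‖W‖ ^ 2 * ‖x₁ - x₂‖ := by
  intro x₁ x₂
  set M := ⨆ i, |θ i|
  have hθM : ∀ i, |θ i| ≤ M := le_ciSup (Set.finite_range _).bddAbove
  have hM : 0 ≤ M := Real.iSup_nonneg fun i => abs_nonneg (θ i)
  have hG_factor : ∀ x, G x = -√(2 / ℓ) • adjoint W (sinFeatureMap θ b (W x)) := by
    intro x
    simp only [hG, adjoint_apply_eq_sum_smul hW, sinFeatureMap, hW]
  set φ := sinFeatureMap θ b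
  calc ‖G x₁ - G x₂‖ = √(2 / ℓ) * ‖adjoint W (φ (W x₁) - φ (W x₂))‖ := by
        rw [hG_factor, hG_factor, ← smul_sub, map_sub, norm_smul, norm_neg,
          Real.norm_of_nonneg (Real.sqrt_nonneg _)]
    _ ≤ √(2 / ℓ) * (‖W‖ * (M * (‖W‖ * ‖x₁ - x₂‖))) := by
        gcongr
        calc ‖adjoint W (φ (W x₁) - φ (W x₂))‖
            ≤ ‖W‖ * ‖φ (W x₁) - φ (W x₂)‖ := by
              simpa only [adjoint.norm_map] using (adjoint W).le_opNorm _
          _ ≤ ‖W‖ * (M * ‖W x₁ - W x₂‖) := by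
              gcongr; exact norm_sinFeatureMap_sub_le hM hθM _ _
          _ ≤ ‖W‖ * (M * (‖W‖ * ‖x₁ - x₂‖)) := by
              rw [← map_sub]; gcongr; exact W.le_opNorm _
    _ = √(2 / ℓ) * M * ‖W‖ ^ 2 * ‖x₁ - x₂‖ := by ring

/-- Gradient Lipschitz bound of Section 6.3: the gradient map
`G(x) = -√(2/ℓ) Σᵢ θᵢ sin(⟪x, wᵢ⟫ + bᵢ) wᵢ` of the random-Fourier-feature function
is `√(2/ℓ)‖θ‖_∞‖W‖²`-Lipschitz. -/
theorem stmt_12 {n ℓ : ℕ} (hn : 0 < n) (hℓ : 0 < ℓ)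
    (w : Fin ℓ → EuclideanSpace ℝ (Fin n)) (b θ : Fin ℓ → ℝ)
    (G : EuclideanSpace ℝ (Fin n) → EuclideanSpace ℝ (Fin n))
    (hG : ∀ x, G x =
      -(Real.sqrt (2 / ℓ)) • ∑ i, (θ i * Real.sin (⟪x, w i⟫ + b i)) • w i)
    (W : EuclideanSpace ℝ (Fin n) →L[ℝ] EuclideanSpace ℝ (Fin ℓ))
    (hW : ∀ x i, W x i = ⟪x, w i⟫) :
    haveI : Nonempty (Fin ℓ) := Fin.pos_iff_nonempty.mp hℓ
    ∀ x₁ x₂ : EuclideanSpace ℝ (Fin n),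
      ‖G x₁ - G x₂‖ ≤ Real.sqrt (2 / ℓ) * (⨆ i, |θ i|) * ‖W‖ ^ 2 * ‖x₁ - x₂‖ :=
  stmt_12_general hℓ w b θ G hG W hW
end
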